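/- arXiv:1312.7765 — 9 statements merged into one kernel-verified Lean document; each statement's English description precedes it below -/
import Mathlib

section
/- In a multi-pointed category (C, N) with weak kernels and weak kernel pairs, if every weak kernel pair satisfies the condition (∗π₀), then the underlying pair (d, c) of every internal reflexive graph satisfies (∗π₀). -/
open CategoryTheory CategoryTheory.Limits

universe v u

variable {C : Type u} [Category.{v} C]

/-- A class of morphisms of a category. -/
abbrev MorClass (C : Type u) [Category.{v} C] :=
  ∀ ⦃X Y : C⦄, (X ⟶ Y) → Prop

/-- An ideal of morphisms: closed under pre- and post-composition with arbitrary morphisms. -/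
def IsMorIdeal (N : MorClass C) : Prop :=
  (∀ ⦃X Y Z : C⦄ (f : X ⟶ Y) (g : Y ⟶ Z), N g → N (f ≫ g)) ∧
  (∀ ⦃X Y Z : C⦄ (f : X ⟶ Y) (g : Y ⟶ Z), N f → N (f ≫ g))

/-- `k` is a weak `N`-kernel of `f`. -/
def IsWeakKernel (N : MorClass C) {K X Y : C} (f : X ⟶ Y) (k : K ⟶ X) : Prop :=
  N (k ≫ f) ∧ ∀ ⦃K' : C⦄ (k' : K' ⟶ X), N (k' ≫ f) → ∃ u : K' ⟶ K, u ≫ k = k'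

/-- `k` is an `N`-kernel of `f` (unique factorization). -/
def IsNKernel (N : MorClass C) {K X Y : C} (f : X ⟶ Y) (k : K ⟶ X) : Prop :=
  N (k ≫ f) ∧ ∀ ⦃K' : C⦄ (k' : K' ⟶ X), N (k' ≫ f) → ∃! u : K' ⟶ K, u ≫ k = k'

def HasWeakKernels (N : MorClass C) : Prop :=
  ∀ ⦃X Y : C⦄ (f : X ⟶ Y), ∃ (K : C) (k : K ⟶ X), IsWeakKernel N f k

def HasNKernels (N : MorClass C) : Prop :=
  ∀ ⦃X Y : C⦄ (f : X ⟶ Y), ∃ (K : C) (k : K ⟶ X), IsNKernel N f k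

/-- The condition (∗π₀) for a pair of parallel morphisms: for a weak `N`-kernel `k` of `f₁`
and any morphism `g`, `g f₁ k = g f₂ k ⟺ g f₁ = g f₂`. -/
def StarPi0 (N : MorClass C) {X Y : C} (f₁ f₂ : X ⟶ Y) : Prop :=
  ∀ ⦃K : C⦄ (k : K ⟶ X), IsWeakKernel N f₁ k →
    ∀ ⦃Z : C⦄ (g : Y ⟶ Z), (k ≫ f₁ ≫ g = k ≫ f₂ ≫ g ↔ f₁ ≫ g = f₂ ≫ g)

/-- `(u, v)` is a weak kernel pair of `f`. -/
def IsWeakKernelPair {P X Y : C} (f : X ⟶ Y) (u v : P ⟶ X) : Prop :=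
  u ≫ f = v ≫ f ∧ ∀ ⦃Q : C⦄ (u' v' : Q ⟶ X), u' ≫ f = v' ≫ f →
    ∃ w : Q ⟶ P, w ≫ u = u' ∧ w ≫ v = v'

/-- `(u, v)` is the kernel pair of `f`. -/
def IsKernelPairOf {P X Y : C} (f : X ⟶ Y) (u v : P ⟶ X) : Prop :=
  u ≫ f = v ≫ f ∧ ∀ ⦃Q : C⦄ (u' v' : Q ⟶ X), u' ≫ f = v' ≫ f →
    ∃! w : Q ⟶ P, w ≫ u = u' ∧ w ≫ v = v'

def HasWeakKernelPairs (C : Type u) [Category.{v} C] : Prop :=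
  ∀ ⦃X Y : C⦄ (f : X ⟶ Y), ∃ (P : C) (u v : P ⟶ X), IsWeakKernelPair f u v

def HasKernelPairs (C : Type u) [Category.{v} C] : Prop :=
  ∀ ⦃X Y : C⦄ (f : X ⟶ Y), ∃ (P : C) (u v : P ⟶ X), IsKernelPairOf f u v

/-- `f` is a coequalizer of the pair `(u, v)`. -/
def IsCoequalizerOf {P X Y : C} (u v : P ⟶ X) (f : X ⟶ Y) : Prop :=
  u ≫ f = v ≫ f ∧ ∀ ⦃Z : C⦄ (g : X ⟶ Z), u ≫ g = v ≫ g → ∃! h : Y ⟶ Z, f ≫ h = g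

/-- `f` is a regular epimorphism: a coequalizer of some pair. -/
def IsRegEpi {X Y : C} (f : X ⟶ Y) : Prop :=
  ∃ (P : C) (u v : P ⟶ X), IsCoequalizerOf u v f

/-- `(p₁, p₂)` is a pullback of `(f, g)`. -/
def IsPullbackSq {P X Y Z : C} (p₁ : P ⟶ X) (p₂ : P ⟶ Y) (f : X ⟶ Z) (g : Y ⟶ Z) : Prop :=
  p₁ ≫ f = p₂ ≫ g ∧ ∀ ⦃Q : C⦄ (q₁ : Q ⟶ X) (q₂ : Q ⟶ Y), q₁ ≫ f = q₂ ≫ g →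
    ∃! w : Q ⟶ P, w ≫ p₁ = q₁ ∧ w ≫ p₂ = q₂

/-- A regular category: finitely complete, kernel pairs have coequalizers, and
regular epimorphisms are stable under pullback. -/
structure IsRegularCat (C : Type u) [Category.{v} C] : Prop where
  hasFiniteLimits : HasFiniteLimits C
  coeqOfKernelPairs : ∀ ⦃P X Y : C⦄ (f : X ⟶ Y) (u v : P ⟶ X), IsKernelPairOf f u v →
    ∃ (Q : C) (q : X ⟶ Q), IsCoequalizerOf u v q
  regEpiStable : ∀ ⦃P X Y Z : C⦄ (p₁ : P ⟶ X) (p₂ : P ⟶ Y) (f : X ⟶ Z) (g : Y ⟶ Z),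
    IsPullbackSq p₁ p₂ f g → IsRegEpi g → IsRegEpi p₁

/-- `P` (a class of objects, regarded as a full subcategory) is a projective cover of `C`. -/
structure IsProjectiveCover (P : Set C) : Prop where
  proj : ∀ ⦃X : C⦄, X ∈ P → ∀ ⦃A B : C⦄ (e : A ⟶ B), IsRegEpi e →
    ∀ f : X ⟶ B, ∃ g : X ⟶ A, g ≫ e = f
  covers : ∀ X : C, ∃ (Q : C) (_ : Q ∈ P) (e : Q ⟶ X), IsRegEpi e

/-- An ideal of the full subcategory on `P`, encoded as a class of morphisms of `C`
supported on `P`-objects and closed under composition with `P`-morphisms. -/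
def IsMorIdealOn (P : Set C) (N : MorClass C) : Prop :=
  (∀ ⦃X Y : C⦄ (f : X ⟶ Y), N f → X ∈ P ∧ Y ∈ P) ∧
  (∀ ⦃X Y Z : C⦄ (f : X ⟶ Y) (g : Y ⟶ Z), X ∈ P → N g → N (f ≫ g)) ∧
  (∀ ⦃X Y Z : C⦄ (f : X ⟶ Y) (g : Y ⟶ Z), Z ∈ P → N f → N (f ≫ g))

/-- The extension `N^C` of an ideal `N` of the full subcategory `P` to `C`. -/
def extClass (P : Set C) (N : MorClass C) : MorClass C := fun X Y f =>
  ∃ (A B : C) (_ : A ∈ P) (_ : B ∈ P) (n : A ⟶ B) (e : A ⟶ X) (e' : B ⟶ Y),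
    IsRegEpi e ∧ IsRegEpi e' ∧ N n ∧ e ≫ f = n ≫ e'

/-- The restriction `M_P` of an ideal `M` of `C` to the full subcategory `P`. -/
def restClass (P : Set C) (M : MorClass C) : MorClass C := fun X Y f =>
  X ∈ P ∧ Y ∈ P ∧ M f

/-- `k` is a weak `N`-kernel of `f` computed in the full subcategory `P`. -/
def IsWeakKernelOn (P : Set C) (N : MorClass C) {K X Y : C} (f : X ⟶ Y) (k : K ⟶ X) : Prop :=
  K ∈ P ∧ N (k ≫ f) ∧ ∀ ⦃K' : C⦄, K' ∈ P → ∀ k' : K' ⟶ X, N (k' ≫ f) →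
    ∃ u : K' ⟶ K, u ≫ k = k'

def HasWeakKernelsOn (P : Set C) (N : MorClass C) : Prop :=
  ∀ ⦃X Y : C⦄, X ∈ P → Y ∈ P → ∀ f : X ⟶ Y, ∃ (K : C) (k : K ⟶ X), IsWeakKernelOn P N f k

/-- The condition (∗π₀) interpreted in the full subcategory `P`. -/
def StarPi0On (P : Set C) (N : MorClass C) {X Y : C} (f₁ f₂ : X ⟶ Y) : Prop :=
  ∀ ⦃K : C⦄ (k : K ⟶ X), IsWeakKernelOn P N f₁ k →
    ∀ ⦃Z : C⦄, Z ∈ P → ∀ g : Y ⟶ Z, (k ≫ f₁ ≫ g = k ≫ f₂ ≫ g ↔ f₁ ≫ g = f₂ ≫ g)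

/-- Every internal reflexive graph of `C` satisfies (∗π₀). -/
def ReflGraphsStarPi0 (N : MorClass C) : Prop :=
  ∀ ⦃G₁ G₀ : C⦄ (d c : G₁ ⟶ G₀) (e : G₀ ⟶ G₁), e ≫ d = 𝟙 G₀ → e ≫ c = 𝟙 G₀ →
    StarPi0 N d c

/-- Every internal reflexive graph of the full subcategory `P` satisfies (∗π₀). -/
def ReflGraphsStarPi0On (P : Set C) (N : MorClass C) : Prop :=
  ∀ ⦃G₁ G₀ : C⦄, G₁ ∈ P → G₀ ∈ P → ∀ (d c : G₁ ⟶ G₀) (e : G₀ ⟶ G₁),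
    e ≫ d = 𝟙 G₀ → e ≫ c = 𝟙 G₀ → StarPi0On P N d c

/-- Every regular epimorphism is a coequalizer of its kernel star (star-regularity condition). -/
def RegEpisCoeqOfKernelStar (N : MorClass C) : Prop :=
  ∀ ⦃X Y : C⦄ (f : X ⟶ Y), IsRegEpi f →
    ∀ ⦃P : C⦄ (u v : P ⟶ X), IsKernelPairOf f u v →
      ∀ ⦃K : C⦄ (k : K ⟶ P), IsNKernel N u k →
        IsCoequalizerOf (k ≫ u) (k ≫ v) f

/-- `f` is `N`-saturating. -/
def IsSaturating (N : MorClass C) {P' Y : C} (f : P' ⟶ Y) : Prop :=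
  ∀ ⦃X : C⦄ (n : X ⟶ Y), N n →
    ∃ (Z : C) (g : Z ⟶ X) (m : Z ⟶ P'), IsRegEpi g ∧ N m ∧ m ≫ f = g ≫ n

/-- `C` is a regular completion of `P`: `P` is a projective cover and every object of `C`
admits a monomorphism into a finite product of `P`-objects (expressed via a jointly monic
finite family). -/
def IsRegularCompletionOf (P : Set C) : Prop :=
  IsProjectiveCover P ∧
    ∀ X : C, ∃ (n : ℕ) (obj : Fin n → C) (_ : ∀ i, obj i ∈ P) (m : ∀ i, X ⟶ obj i),
      ∀ ⦃W : C⦄ (a b : W ⟶ X), (∀ i, a ≫ m i = b ≫ m i) → a = b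

/-- `C` is pointed via the ideal `N` of null morphisms. -/
def IsPointedVia (N : MorClass C) : Prop :=
  IsMorIdeal N ∧ ∀ X Y : C, ∃! f : X ⟶ Y, N f

/-- The full subcategory `P` is pointed via the ideal `N` of null morphisms. -/
def IsPointedOn (P : Set C) (N : MorClass C) : Prop :=
  IsMorIdealOn P N ∧ ∀ ⦃X Y : C⦄, X ∈ P → Y ∈ P → ∃! f : X ⟶ Y, N f

/-- `f` is a normal epimorphism (a cokernel) with respect to the ideal `N`. -/
def IsNormalEpi (N : MorClass C) {X Y : C} (f : X ⟶ Y) : Prop :=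
  ∃ (A : C) (h : A ⟶ X), N (h ≫ f) ∧
    ∀ ⦃Z : C⦄ (g : X ⟶ Z), N (h ≫ g) → ∃! t : Y ⟶ Z, f ≫ t = g

/-!
Let `k` be a weak kernel of `d` with `k d g = k c g`, let `(u, v)` be a weak kernel pair of `d`
and `l` a weak kernel of `u`. Both `l u` and `l v` factor through `k`, so
`l u c g = l u d g = l v d g = l v c g`, and (∗π₀) for `(u, v)` gives `u c g = v c g`.
Since `(1, d e)` factors through `(u, v)`, this yields `c g = d e c g = d g`.
-/

lemma IsWeakKernel.comp_eq_comp {N : MorClass C} {K X Y Z W : C} {d c : X ⟶ Y} {k : K ⟶ X}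
    (hk : IsWeakKernel N d k) {g : Y ⟶ Z} (hkg : k ≫ d ≫ g = k ≫ c ≫ g) {x : W ⟶ X}
    (hx : N (x ≫ d)) : x ≫ d ≫ g = x ≫ c ≫ g := by
  obtain ⟨s, rfl⟩ := hk.2 x hx
  simp only [Category.assoc, hkg]

lemma IsWeakKernelPair.eq_of_section {X Y Z P : C} {d : X ⟶ Y} {u v : P ⟶ X}
    (huv : IsWeakKernelPair d u v) {e : Y ⟶ X} (hed : e ≫ d = 𝟙 Y) {h : X ⟶ Z}
    (hh : u ≫ h = v ≫ h) : h = d ≫ e ≫ h := by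
  obtain ⟨w, hwu, hwv⟩ := huv.2 (𝟙 X) (d ≫ e) (by simp [hed])
  simpa only [← Category.assoc, hwu, hwv, Category.id_comp] using congrArg (w ≫ ·) hh

/-- In a multi-pointed category (C, N) with weak kernels and weak kernel pairs,
if every weak kernel pair satisfies (∗π₀), then the underlying pair of every internal
reflexive graph satisfies (∗π₀). -/
theorem statement0 (N : MorClass C) (hN : IsMorIdeal N)
    (hwk : HasWeakKernels N) (hwkp : HasWeakKernelPairs C)
    (h : ∀ ⦃P X Y : C⦄ (f : X ⟶ Y) (u v : P ⟶ X), IsWeakKernelPair f u v → StarPi0 N u v) :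
    ReflGraphsStarPi0 N := by
  intro G₁ G₀ d c e hed hec K k hk Z g
  refine ⟨fun hkg => ?_, fun hdg => by rw [hdg]⟩
  obtain ⟨P, u, v, huv⟩ := hwkp d
  obtain ⟨L, l, hl⟩ := hwk u
  have hlu : N ((l ≫ u) ≫ d) := hN.2 _ d hl.1
  have hlv : N ((l ≫ v) ≫ d) := by simpa only [Category.assoc, huv.1] using hlu
  have hluv : l ≫ u ≫ c ≫ g = l ≫ v ≫ c ≫ g := by
    calc l ≫ u ≫ c ≫ g = l ≫ u ≫ d ≫ g := by simpa using (hk.comp_eq_comp hkg hlu).symm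
      _ = l ≫ v ≫ d ≫ g := by rw [reassoc_of% huv.1]
      _ = l ≫ v ≫ c ≫ g := by simpa using hk.comp_eq_comp hkg hlv
  have hcg := huv.eq_of_section hed ((h d u v huv l hl (c ≫ g)).mp hluv)
  rw [reassoc_of% hec] at hcg
  exact hcg.symm
end

section
/- In a multi-pointed category (C, N) with weak kernels, weak kernel pairs, and kernel pairs, if every kernel pair satisfies (∗π₀), then every weak kernel pair satisfies (∗π₀). -/
open CategoryTheory CategoryTheory.Limits

universe v u

variable {C : Type u} [Category.{v} C]

/- If `(u, v)` is a weak kernel pair and `(p₁, p₂)` the kernel pair of `f`, then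
`(u, v) = (s ≫ p₁, s ≫ p₂)` for the comparison `s`, which is a split epimorphism because the
weak universality of `(u, v)` yields a section of it. Precomposing a pair with a split
epimorphism preserves (∗π₀): a weak `N`-kernel `k` of `s ≫ p₁` gives the weak `N`-kernel
`k ≫ s` of `p₁`. -/

theorem IsWeakKernel.comp_splitEpi {N : MorClass C} {K P Q Y : C} {s : P ⟶ Q} [IsSplitEpi s]
    {p : Q ⟶ Y} {k : K ⟶ P} (hk : IsWeakKernel N (s ≫ p) k) : IsWeakKernel N p (k ≫ s) := by
  refine ⟨by simpa using hk.1, fun K' k' hk' => ?_⟩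
  obtain ⟨w, hw⟩ := hk.2 (k' ≫ section_ s) (by simpa using hk')
  exact ⟨w, by rw [← Category.assoc, hw, Category.assoc, IsSplitEpi.id, Category.comp_id]⟩

theorem StarPi0.splitEpi_comp {N : MorClass C} {P Q Y : C} {p₁ p₂ : Q ⟶ Y}
    (hp : StarPi0 N p₁ p₂) (s : P ⟶ Q) [IsSplitEpi s] : StarPi0 N (s ≫ p₁) (s ≫ p₂) := by
  intro K k hk Z g
  refine ⟨fun hkg => ?_, fun hg => by simp only [Category.assoc] at hg ⊢; rw [hg]⟩
  have hpg : p₁ ≫ g = p₂ ≫ g :=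
    (hp (k ≫ s) hk.comp_splitEpi g).mp (by simpa only [Category.assoc] using hkg)
  simp only [Category.assoc, hpg]

theorem IsWeakKernelPair.exists_splitEpi_of_isKernelPairOf {P Q X Y : C} {f : X ⟶ Y}
    {u v : P ⟶ X} {p₁ p₂ : Q ⟶ X} (huv : IsWeakKernelPair f u v)
    (hp : IsKernelPairOf f p₁ p₂) : ∃ s : P ⟶ Q, IsSplitEpi s ∧ s ≫ p₁ = u ∧ s ≫ p₂ = v := by
  obtain ⟨s, hs₁, hs₂⟩ := (hp.2 u v huv.1).exists
  obtain ⟨t, ht₁, ht₂⟩ := huv.2 p₁ p₂ hp.1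
  have hts : t ≫ s = 𝟙 Q := (hp.2 p₁ p₂ hp.1).unique
    (by simp only [Category.assoc, hs₁, hs₂, ht₁, ht₂, and_self]) (by simp)
  exact ⟨s, IsSplitEpi.mk' ⟨t, hts⟩, hs₁, hs₂⟩

theorem statement1_general (N : MorClass C)
    (hkp : HasKernelPairs C)
    (h : ∀ ⦃P X Y : C⦄ (f : X ⟶ Y) (u v : P ⟶ X), IsKernelPairOf f u v → StarPi0 N u v) :
    ∀ ⦃P X Y : C⦄ (f : X ⟶ Y) (u v : P ⟶ X), IsWeakKernelPair f u v → StarPi0 N u v := by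
  intro P X Y f u v huv
  obtain ⟨Q, p₁, p₂, hp⟩ := hkp f
  obtain ⟨s, _, rfl, rfl⟩ := huv.exists_splitEpi_of_isKernelPairOf hp
  exact (h f p₁ p₂ hp).splitEpi_comp s

/-- In a multi-pointed category (C, N) with weak kernels, weak kernel pairs,
and kernel pairs, if every kernel pair satisfies (∗π₀), then every weak kernel pair
satisfies (∗π₀). -/
theorem statement1 (N : MorClass C) (hN : IsMorIdeal N)
    (hwk : HasWeakKernels N) (hwkp : HasWeakKernelPairs C) (hkp : HasKernelPairs C)
    (h : ∀ ⦃P X Y : C⦄ (f : X ⟶ Y) (u v : P ⟶ X), IsKernelPairOf f u v → StarPi0 N u v) :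
    ∀ ⦃P X Y : C⦄ (f : X ⟶ Y) (u v : P ⟶ X), IsWeakKernelPair f u v → StarPi0 N u v :=
  statement1_general N hkp h
end

section
/- In a multi-pointed category (C, N) with weak kernels and weak kernel pairs, the following are equivalent: (a) the underlying pair of every internal reflexive graph satisfies (∗π₀); (b) every weak kernel pair satisfies (∗π₀). If moreover C has kernel pairs, these are further equivalent to: (c) every reflexive relation satisfies (∗π₀); (d) every kernel pair satisfies (∗π₀). -/
open CategoryTheory CategoryTheory.Limits

universe v u

variable {C : Type u} [Category.{v} C]

/-!
For a reflexive graph `(d, c, e)` and a weak kernel pair `(u, v)` of `d`, condition (∗π₀) for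
`(u, v)` implies it for `(d, c)`: if `k` is a weak kernel of `d` with `k d g = k c g`, then any
morphism `x` with `x d` null factors through `k`, hence `x d g = x c g`. Applied to `x = k' u`
and `x = k' v` for a weak kernel `k'` of `u`, this gives `k' u c g = k' v c g`, so `u c g = v c g`
by (∗π₀), and restricting along the lift of `(1, d e)` through `(u, v)` yields `c g = d g`.
Conversely every (weak) kernel pair is a reflexive graph, and a kernel pair is a relation.
-/

lemma starPi0_of_imp (N : MorClass C) {X Y : C} {f₁ f₂ : X ⟶ Y}
    (h : ∀ ⦃K : C⦄ (k : K ⟶ X), IsWeakKernel N f₁ k →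
      ∀ ⦃Z : C⦄ (g : Y ⟶ Z), k ≫ f₁ ≫ g = k ≫ f₂ ≫ g → f₁ ≫ g = f₂ ≫ g) :
    StarPi0 N f₁ f₂ :=
  fun _ k hk _ g => ⟨h k hk g, fun hg => by rw [hg]⟩

lemma IsWeakKernel.comp_eq_of_null {N : MorClass C} {K X Y Z W : C} {f : X ⟶ Y} {k : K ⟶ X}
    (hk : IsWeakKernel N f k) {p q : X ⟶ Z} (h : k ≫ p = k ≫ q) {x : W ⟶ X}
    (hx : N (x ≫ f)) : x ≫ p = x ≫ q := by
  obtain ⟨s, rfl⟩ := hk.2 x hx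
  simp only [Category.assoc, h]

lemma IsWeakKernelPair.exists_common_section {P X Y : C} {f : X ⟶ Y} {u v : P ⟶ X}
    (huv : IsWeakKernelPair f u v) : ∃ w : X ⟶ P, w ≫ u = 𝟙 X ∧ w ≫ v = 𝟙 X :=
  huv.2 (𝟙 X) (𝟙 X) rfl

lemma IsKernelPairOf.isWeakKernelPair {P X Y : C} {f : X ⟶ Y} {u v : P ⟶ X}
    (huv : IsKernelPairOf f u v) : IsWeakKernelPair f u v :=
  ⟨huv.1, fun _ u' v' h => (huv.2 u' v' h).exists⟩

lemma IsKernelPairOf.hom_ext {P X Y W : C} {f : X ⟶ Y} {u v : P ⟶ X}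
    (huv : IsKernelPairOf f u v) {a b : W ⟶ P} (hu : a ≫ u = b ≫ u) (hv : a ≫ v = b ≫ v) :
    a = b := by
  obtain ⟨_, _, uniq⟩ := huv.2 (a ≫ u) (a ≫ v) (by simp only [Category.assoc, huv.1])
  exact (uniq a ⟨rfl, rfl⟩).trans (uniq b ⟨hu.symm, hv.symm⟩).symm

lemma ReflGraphsStarPi0.starPi0_of_isWeakKernelPair {N : MorClass C} (ha : ReflGraphsStarPi0 N)
    {P X Y : C} {f : X ⟶ Y} {u v : P ⟶ X} (huv : IsWeakKernelPair f u v) : StarPi0 N u v :=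
  let ⟨w, hwu, hwv⟩ := huv.exists_common_section
  ha u v w hwu hwv

lemma starPi0_of_reflGraph_of_isWeakKernelPair {N : MorClass C} (hN : IsMorIdeal N)
    (hwk : HasWeakKernels N) {G₁ G₀ : C} {d c : G₁ ⟶ G₀} {e : G₀ ⟶ G₁} (hd : e ≫ d = 𝟙 G₀)
    (hc : e ≫ c = 𝟙 G₀) {P : C} {u v : P ⟶ G₁} (huv : IsWeakKernelPair d u v)
    (hstar : StarPi0 N u v) : StarPi0 N d c := by
  refine starPi0_of_imp N fun K k hk Z g h => ?_
  obtain ⟨K', k', hk'⟩ := hwk u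
  have hu_null : N ((k' ≫ u) ≫ d) := hN.2 _ d hk'.1
  have hv_null : N ((k' ≫ v) ≫ d) := by
    simpa only [Category.assoc, huv.1] using hu_null
  have hucg : u ≫ c ≫ g = v ≫ c ≫ g := by
    refine (hstar k' hk' (c ≫ g)).mp ?_
    calc k' ≫ u ≫ c ≫ g = k' ≫ u ≫ d ≫ g := by
          simpa only [Category.assoc] using (hk.comp_eq_of_null h hu_null).symm
      _ = k' ≫ v ≫ d ≫ g := by rw [reassoc_of% huv.1]
      _ = k' ≫ v ≫ c ≫ g := by
          simpa only [Category.assoc] using hk.comp_eq_of_null h hv_null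
  obtain ⟨w, hwu, hwv⟩ := huv.2 (𝟙 G₁) (d ≫ e) (by simp [hd])
  calc d ≫ g = w ≫ v ≫ c ≫ g := by simp [reassoc_of% hwv, reassoc_of% hc]
    _ = c ≫ g := by rw [← hucg, reassoc_of% hwu]

lemma reflGraphsStarPi0_of_forall_exists {N : MorClass C} (hN : IsMorIdeal N)
    (hwk : HasWeakKernels N)
    (h : ∀ ⦃X Y : C⦄ (f : X ⟶ Y), ∃ (P : C) (u v : P ⟶ X),
      IsWeakKernelPair f u v ∧ StarPi0 N u v) :
    ReflGraphsStarPi0 N := fun _ _ d _ _ hd hc =>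
  let ⟨_, _, _, huv, hstar⟩ := h d
  starPi0_of_reflGraph_of_isWeakKernelPair hN hwk hd hc huv hstar

/-- In a multi-pointed category (C, N) with weak kernels and weak kernel pairs:
(a) every reflexive graph satisfies (∗π₀) iff (b) every weak kernel pair satisfies (∗π₀);
and if moreover C has kernel pairs, these are further equivalent to (c) every reflexive
relation satisfying (∗π₀) and to (d) every kernel pair satisfying (∗π₀). -/
theorem statement2 (N : MorClass C) (hN : IsMorIdeal N)
    (hwk : HasWeakKernels N) (hwkp : HasWeakKernelPairs C) :
    (ReflGraphsStarPi0 N ↔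
      ∀ ⦃P X Y : C⦄ (f : X ⟶ Y) (u v : P ⟶ X), IsWeakKernelPair f u v → StarPi0 N u v) ∧
    (HasKernelPairs C →
      ((ReflGraphsStarPi0 N ↔
        ∀ ⦃G₁ G₀ : C⦄ (d c : G₁ ⟶ G₀) (e : G₀ ⟶ G₁), e ≫ d = 𝟙 G₀ → e ≫ c = 𝟙 G₀ →
          (∀ ⦃W : C⦄ (a b : W ⟶ G₁), a ≫ d = b ≫ d → a ≫ c = b ≫ c → a = b) →
          StarPi0 N d c) ∧
       (ReflGraphsStarPi0 N ↔
        ∀ ⦃P X Y : C⦄ (f : X ⟶ Y) (u v : P ⟶ X), IsKernelPairOf f u v → StarPi0 N u v))) := by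
  refine ⟨⟨fun ha _ _ _ _ _ _ huv => ha.starPi0_of_isWeakKernelPair huv, fun hb =>
    reflGraphsStarPi0_of_forall_exists hN hwk fun _ _ f =>
      let ⟨P, u, v, huv⟩ := hwkp f
      ⟨P, u, v, huv, hb f u v huv⟩⟩, fun hkp => ?_⟩
  have of_kernelPairs : (∀ ⦃P X Y : C⦄ (f : X ⟶ Y) (u v : P ⟶ X), IsKernelPairOf f u v →
      StarPi0 N u v) → ReflGraphsStarPi0 N := fun hd =>
    reflGraphsStarPi0_of_forall_exists hN hwk fun _ _ f =>
      let ⟨P, u, v, huv⟩ := hkp f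
      ⟨P, u, v, huv.isWeakKernelPair, hd f u v huv⟩
  refine ⟨⟨fun ha _ _ d c e hd hc _ => ha d c e hd hc, fun hc => of_kernelPairs ?_⟩,
    ⟨fun ha _ _ _ _ _ _ huv => ha.starPi0_of_isWeakKernelPair huv.isWeakKernelPair,
      of_kernelPairs⟩⟩
  intro P X Y f u v huv
  obtain ⟨w, hwu, hwv⟩ := huv.isWeakKernelPair.exists_common_section
  exact hc u v w hwu hwv fun _ _ _ => huv.hom_ext
end

section
/- Let C be a regular category with projective cover P. For any ideal N in P, the restriction to P of the extension of N to C equals N, i.e. (N^C)_P = N. -/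
open CategoryTheory CategoryTheory.Limits

universe v u

variable {C : Type u} [Category.{v} C]

theorem isRegEpi_id (X : C) : IsRegEpi (𝟙 X) :=
  ⟨X, 𝟙 X, 𝟙 X, rfl, fun _ g _ => ⟨g, Category.id_comp g, fun h hh => by simpa using hh⟩⟩

theorem IsProjectiveCover.exists_section {P : Set C} (hP : IsProjectiveCover P) {X A : C}
    (hX : X ∈ P) {e : A ⟶ X} (he : IsRegEpi e) : ∃ s : X ⟶ A, s ≫ e = 𝟙 X :=
  hP.proj hX e he (𝟙 X)

theorem IsMorIdealOn.extClass_of_mem {P : Set C} {N : MorClass C} (hN : IsMorIdealOn P N)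
    {X Y : C} {f : X ⟶ Y} (hf : N f) : extClass P N f :=
  have ⟨hX, hY⟩ := hN.1 f hf
  ⟨X, Y, hX, hY, f, 𝟙 X, 𝟙 Y, isRegEpi_id X, isRegEpi_id Y, hf, by simp⟩

/-- A section `s` of the cover `e : A ⟶ X` writes `f` as `s ≫ n ≫ e'`. -/
theorem IsMorIdealOn.mem_of_extClass {P : Set C} (hP : IsProjectiveCover P) {N : MorClass C}
    (hN : IsMorIdealOn P N) {X Y : C} (hX : X ∈ P) (hY : Y ∈ P) {f : X ⟶ Y}
    (hf : extClass P N f) : N f := by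
  obtain ⟨A, B, -, -, n, e, e', he, -, hn, hsq⟩ := hf
  obtain ⟨s, hs⟩ := hP.exists_section hX he
  have hfactor : f = (s ≫ n) ≫ e' :=
    calc f = (s ≫ e) ≫ f := by rw [hs, Category.id_comp]
      _ = (s ≫ n) ≫ e' := by rw [Category.assoc, hsq, Category.assoc]
  rw [hfactor]
  exact hN.2.2 _ _ hY (hN.2.1 _ _ hX hn)

theorem statement4_general (P : Set C) (hP : IsProjectiveCover P)
    (N : MorClass C) (hN : IsMorIdealOn P N) :
    restClass P (extClass P N) = N := by
  funext X Y f
  apply propext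
  constructor
  · rintro ⟨hX, hY, hf⟩
    exact hN.mem_of_extClass hP hX hY hf
  · intro hf
    have ⟨hX, hY⟩ := hN.1 f hf
    exact ⟨hX, hY, hN.extClass_of_mem hf⟩

/-- For a regular category C with projective cover P and any ideal N in P,
the restriction to P of the extension of N to C equals N: (N^C)_P = N. -/
theorem statement4 (hC : IsRegularCat C) (P : Set C) (hP : IsProjectiveCover P)
    (N : MorClass C) (hN : IsMorIdealOn P N) :
    restClass P (extClass P N) = N :=
  statement4_general P hP N hN
end

section
/- Let C be a regular category with projective cover P and let N be an ideal in P. If P has weak N-kernels, then C has N^C-kernels. -/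
open CategoryTheory CategoryTheory.Limits

universe v u

variable {C : Type u} [Category.{v} C]

/-! The kernel of `f : X ⟶ Y` is built by covering `Y` by `eY : Q ⟶ Y` with `Q ∈ P`, covering
the pullback `D` of `f` along `eY` by `qD : PD ⟶ D` with `PD ∈ P`, and taking the regular image
`m` of `k ≫ qD ≫ p₁`, where `k` is a weak `N`-kernel in `P` of `qD ≫ p₂ : PD ⟶ Q`. The square
`r ≫ m ≫ f = (k ≫ qD ≫ p₂) ≫ eY` shows `m ≫ f ∈ N^C`. Conversely, if `k' ≫ f ∈ N^C` is witnessed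
by `e ≫ k' ≫ f = n ≫ e'`, projectivity of the domains lifts `e'` through `eY` and then `e ≫ k'`
through `qD`, the lift factors through `k`, and the resulting factorization of `e ≫ k'` through
`m` descends along the regular epimorphism `e` because `m` is monic. -/

lemma IsCoequalizerOf.epi {P X Y : C} {u v : P ⟶ X} {f : X ⟶ Y} (hf : IsCoequalizerOf u v f) :
    Epi f := by
  refine ⟨fun {Z} g g' hgg' => ?_⟩
  obtain ⟨t, -, ht⟩ := hf.2 (f ≫ g) (by rw [← Category.assoc, hf.1, Category.assoc])
  exact (ht g rfl).trans (ht g' hgg'.symm).symm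

lemma IsRegEpi.epi {X Y : C} {f : X ⟶ Y} (hf : IsRegEpi f) : Epi f :=
  let ⟨_, _, _, hco⟩ := hf
  hco.epi

lemma isPullbackSq_pullback {X Y Z : C} (f : X ⟶ Z) (g : Y ⟶ Z) [HasPullback f g] :
    IsPullbackSq (pullback.fst f g) (pullback.snd f g) f g := by
  refine ⟨pullback.condition, fun Q q₁ q₂ hq =>
    ⟨pullback.lift q₁ q₂ hq, ⟨pullback.lift_fst _ _ _, pullback.lift_snd _ _ _⟩, ?_⟩⟩
  rintro w ⟨rfl, rfl⟩
  apply pullback.hom_ext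
  exacts [(pullback.lift_fst _ _ _).symm, (pullback.lift_snd _ _ _).symm]

lemma IsRegEpi.exists_lift_of_mono {A B I X : C} {e : A ⟶ B} (he : IsRegEpi e) {m : I ⟶ X}
    [Mono m] {k : B ⟶ X} {g : A ⟶ I} (hg : e ≫ k = g ≫ m) : ∃ h : B ⟶ I, h ≫ m = k := by
  obtain ⟨_, u, v, huv, huniv⟩ := he
  have hug : u ≫ g = v ≫ g := by
    rw [← cancel_mono m, Category.assoc, Category.assoc, ← hg, reassoc_of% huv]
  obtain ⟨h, hh, -⟩ := huniv g hug
  refine ⟨h, ?_⟩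
  have : Epi e := IsCoequalizerOf.epi ⟨huv, huniv⟩
  rw [← cancel_epi e, reassoc_of% hh, hg]

namespace IsRegularCat

lemma exists_regEpi_comm_sq (hC : IsRegularCat C) {T X I : C} (a : T ⟶ I) {q : X ⟶ I}
    (hq : IsRegEpi q) : ∃ (S : C) (s : S ⟶ T) (x : S ⟶ X), IsRegEpi s ∧ s ≫ a = x ≫ q := by
  have := hC.hasFiniteLimits
  exact ⟨_, pullback.fst a q, pullback.snd a q,
    hC.regEpiStable _ _ _ _ (isPullbackSq_pullback a q) hq, pullback.condition⟩

lemma exists_regEpi_mono_factorization (hC : IsRegularCat C) {X Y : C} (f : X ⟶ Y) :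
    ∃ (I : C) (r : X ⟶ I) (m : I ⟶ Y), IsRegEpi r ∧ Mono m ∧ r ≫ m = f := by
  have := hC.hasFiniteLimits
  have hkp : IsKernelPairOf f (pullback.fst f f) (pullback.snd f f) := isPullbackSq_pullback f f
  obtain ⟨I, q, hq⟩ := hC.coeqOfKernelPairs f _ _ hkp
  obtain ⟨m, hm, -⟩ := hq.2 f hkp.1
  refine ⟨I, q, m, ⟨_, _, _, hq⟩, ⟨fun {T} a b hab => ?_⟩, hm⟩
  -- Cover `a` and `b` by `x` and `y` over one regular epi `s₂ ≫ s₁`; then `(x, y)` factors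
  -- through the kernel pair of `f`, which `q` coequalizes.
  obtain ⟨_, s₁, x, hs₁, hx⟩ := hC.exists_regEpi_comm_sq a ⟨_, _, _, hq⟩
  obtain ⟨_, s₂, y, hs₂, hy⟩ := hC.exists_regEpi_comm_sq (s₁ ≫ b) ⟨_, _, _, hq⟩
  have hxy : (s₂ ≫ x) ≫ f = y ≫ f := by
    simp only [← hm, Category.assoc, ← reassoc_of% hx, ← reassoc_of% hy, hab]
  obtain ⟨w, ⟨hwx, hwy⟩, -⟩ := hkp.2 _ _ hxy
  have : Epi s₁ := hs₁.epi
  have : Epi s₂ := hs₂.epi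
  rw [← cancel_epi s₁, ← cancel_epi s₂, hx, hy, ← reassoc_of% hwx, ← hwy, hq.1, Category.assoc]

end IsRegularCat

section KernelConstruction

variable {P : Set C} {N : MorClass C} {X Y Q D PD K I : C} {f : X ⟶ Y} {eY : Q ⟶ Y}
  {p₁ : D ⟶ X} {p₂ : D ⟶ Q} {qD : PD ⟶ D} {k : K ⟶ PD} {r : K ⟶ I} {m : I ⟶ X}

lemma extClass_comp_of_image (hQ : Q ∈ P) (heY : IsRegEpi eY) (hsq : p₁ ≫ f = p₂ ≫ eY)
    (hK : K ∈ P) (hk : N (k ≫ qD ≫ p₂)) (hr : IsRegEpi r) (hrm : r ≫ m = k ≫ qD ≫ p₁) :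
    extClass P N (m ≫ f) :=
  ⟨K, Q, hK, hQ, k ≫ qD ≫ p₂, r, eY, hr, heY, hk,
    by simp only [reassoc_of% hrm, hsq, Category.assoc]⟩

lemma exists_lift_of_extClass (hP : IsProjectiveCover P) (hN : IsMorIdealOn P N) (hQ : Q ∈ P)
    (heY : IsRegEpi eY) (hpb : IsPullbackSq p₁ p₂ f eY) (hqD : IsRegEpi qD)
    (hk : IsWeakKernelOn P N (qD ≫ p₂) k) [Mono m] (hrm : r ≫ m = k ≫ qD ≫ p₁)
    {K' : C} {k' : K' ⟶ X} (hk' : extClass P N (k' ≫ f)) : ∃ h : K' ⟶ I, h ≫ m = k' := by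
  obtain ⟨A, B, hA, hB, n, e, e', he, -, hn, hcomm⟩ := hk'
  obtain ⟨s, hs⟩ := hP.proj hB eY heY e'
  obtain ⟨w, ⟨hw₁, hw₂⟩, -⟩ := hpb.2 (e ≫ k') (n ≫ s)
    (by rw [Category.assoc, hcomm, Category.assoc, hs])
  obtain ⟨t, ht⟩ := hP.proj hA qD hqD w
  have htN : N (t ≫ qD ≫ p₂) := by
    rw [reassoc_of% ht, hw₂]
    exact hN.2.2 n s hQ hn
  obtain ⟨u, hu⟩ := hk.2.2 hA t htN
  refine he.exists_lift_of_mono (g := u ≫ r) ?_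
  rw [Category.assoc, hrm, ← hw₁, ← ht, ← hu]
  simp only [Category.assoc]

end KernelConstruction

/-- For a regular category C with projective cover P and an ideal N in P,
if P has weak N-kernels then C has N^C-kernels. -/
theorem statement5 (hC : IsRegularCat C) (P : Set C) (hP : IsProjectiveCover P)
    (N : MorClass C) (hN : IsMorIdealOn P N) (h : HasWeakKernelsOn P N) :
    HasNKernels (extClass P N) := by
  have := hC.hasFiniteLimits
  intro X Y f
  obtain ⟨Q, hQ, eY, heY⟩ := hP.covers Y
  obtain ⟨PD, hPD, qD, hqD⟩ := hP.covers (pullback f eY)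
  obtain ⟨K, k, hk⟩ := h hPD hQ (qD ≫ pullback.snd f eY)
  obtain ⟨I, r, m, hr, hm, hrm⟩ :=
    hC.exists_regEpi_mono_factorization (k ≫ qD ≫ pullback.fst f eY)
  refine ⟨I, m, extClass_comp_of_image hQ heY pullback.condition hk.1 hk.2.1 hr hrm,
    fun K' k' hk' => ?_⟩
  obtain ⟨g, hg⟩ :=
    exists_lift_of_extClass hP hN hQ heY (isPullbackSq_pullback f eY) hqD hk hrm hk'
  exact ⟨g, hg, fun g' hg' => hm.right_cancellation _ _ (hg'.trans hg.symm)⟩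
end

section
/- Let C be a regular category with projective cover P and let N be an ideal in P. If C has N^C-kernels, then P has weak N-kernels; explicitly, if k : K → Q is an N^C-kernel in C of a morphism u : Q → R of P, and p : P' → K is a regular epimorphism with P' ∈ P, then kp is a weak N-kernel of u in P. -/
open CategoryTheory CategoryTheory.Limits

universe v u

variable {C : Type u} [Category.{v} C]

namespace IsMorIdealOn

variable {P : Set C} {N : MorClass C}

theorem extClass_of (hN : IsMorIdealOn P N) {X Y : C} {f : X ⟶ Y} (hf : N f) :
    extClass P N f :=
  ⟨X, Y, (hN.1 f hf).1, (hN.1 f hf).2, f, 𝟙 X, 𝟙 Y, isRegEpi_id X, isRegEpi_id Y, hf, by simp⟩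

theorem comp_of_extClass (hN : IsMorIdealOn P N) (hP : IsProjectiveCover P)
    {X' X Y : C} (hX' : X' ∈ P) (hY : Y ∈ P) (p : X' ⟶ X) {f : X ⟶ Y}
    (hf : extClass P N f) : N (p ≫ f) := by
  obtain ⟨A, B, -, -, n, e, e', he, -, hn, hsq⟩ := hf
  obtain ⟨g, rfl⟩ := hP.proj hX' e he p
  have hpf : (g ≫ e) ≫ f = (g ≫ n) ≫ e' := by simp [hsq]
  rw [hpf]
  exact hN.2.2 _ _ hY (hN.2.1 _ _ hX' hn)

theorem isWeakKernelOn_comp_of_isNKernel (hN : IsMorIdealOn P N) (hP : IsProjectiveCover P)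
    {Q R K P' : C} (hR : R ∈ P) (hP' : P' ∈ P) {u : Q ⟶ R} {k : K ⟶ Q}
    (hk : IsNKernel (extClass P N) u k) {p : P' ⟶ K} (hp : IsRegEpi p) :
    IsWeakKernelOn P N u (p ≫ k) := by
  refine ⟨hP', ?_, fun K' hK' k' hk' => ?_⟩
  · rw [Category.assoc]
    exact hN.comp_of_extClass hP hP' hR p hk.1
  · obtain ⟨w, hw, -⟩ := hk.2 k' (hN.extClass_of hk')
    obtain ⟨v, rfl⟩ := hP.proj hK' p hp w
    exact ⟨v, by rw [← hw, Category.assoc]⟩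

end IsMorIdealOn

theorem statement6_general (P : Set C) (hP : IsProjectiveCover P)
    (N : MorClass C) (hN : IsMorIdealOn P N) (h : HasNKernels (extClass P N)) :
    HasWeakKernelsOn P N ∧
      ∀ ⦃Q R K P' : C⦄, Q ∈ P → R ∈ P → P' ∈ P →
        ∀ (u : Q ⟶ R) (k : K ⟶ Q), IsNKernel (extClass P N) u k →
          ∀ p : P' ⟶ K, IsRegEpi p → IsWeakKernelOn P N u (p ≫ k) := by
  have weakKernel : ∀ ⦃Q R K P' : C⦄, Q ∈ P → R ∈ P → P' ∈ P →
      ∀ (u : Q ⟶ R) (k : K ⟶ Q), IsNKernel (extClass P N) u k →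
        ∀ p : P' ⟶ K, IsRegEpi p → IsWeakKernelOn P N u (p ≫ k) :=
    fun _ _ _ _ _ hR hP' _ _ hk _ hp => hN.isWeakKernelOn_comp_of_isNKernel hP hR hP' hk hp
  refine ⟨fun X Y hX hY f => ?_, weakKernel⟩
  obtain ⟨K, k, hk⟩ := h f
  obtain ⟨P', hP', p, hp⟩ := hP.covers K
  exact ⟨P', p ≫ k, weakKernel hX hY hP' f k hk p hp⟩

/-- For a regular category C with projective cover P and an ideal N in P,
if C has N^C-kernels then P has weak N-kernels; explicitly, if k is an N^C-kernel in C
of a morphism u of P and p is a regular epimorphism onto its domain from a P-object,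
then kp is a weak N-kernel of u in P. -/
theorem statement6 (hC : IsRegularCat C) (P : Set C) (hP : IsProjectiveCover P)
    (N : MorClass C) (hN : IsMorIdealOn P N) (h : HasNKernels (extClass P N)) :
    HasWeakKernelsOn P N ∧
      ∀ ⦃Q R K P' : C⦄, Q ∈ P → R ∈ P → P' ∈ P →
        ∀ (u : Q ⟶ R) (k : K ⟶ Q), IsNKernel (extClass P N) u k →
          ∀ p : P' ⟶ K, IsRegEpi p → IsWeakKernelOn P N u (p ≫ k) :=
  statement6_general P hP N hN h
end

section
/- Let C be a regular category with projective cover P and let N be an ideal in C admitting N-kernels. Then (N_P)^C ⊆ N. -/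
open CategoryTheory CategoryTheory.Limits

universe v u

variable {C : Type u} [Category.{v} C]

/-!
If `e ≫ f ∈ N` with `e` a regular epimorphism, then `e` factors through the `N`-kernel `k` of `f`.
Uniqueness of factorizations makes `k` a monomorphism, and a monomorphism through which a regular
(hence strong) epimorphism factors is an isomorphism; so `f = k⁻¹ ≫ (k ≫ f) ∈ N`. For `f` in
`(N_P)^C`, `e ≫ f = n ≫ e'` with `n ∈ N`.
-/

lemma IsCoequalizerOf.isRegularEpi {P X Y : C} {u v : P ⟶ X} {f : X ⟶ Y}
    (hf : IsCoequalizerOf u v f) : IsRegularEpi f :=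
  isRegularEpi_of_regularEpi <| Cofork.IsColimit.regularEpi (c := Cofork.ofπ f hf.1) <|
    Cofork.IsColimit.ofExistsUnique fun s => hf.2 s.π s.condition

lemma IsRegEpi.isRegularEpi {X Y : C} {f : X ⟶ Y} (hf : IsRegEpi f) : IsRegularEpi f :=
  let ⟨_, _, _, hcoeq⟩ := hf
  hcoeq.isRegularEpi

lemma IsNKernel.mono {N : MorClass C} (hN : IsMorIdeal N) {K X Y : C} {f : X ⟶ Y} {k : K ⟶ X}
    (hk : IsNKernel N f k) : Mono k where
  right_cancellation a b hab := by
    have hmem : N ((a ≫ k) ≫ f) := by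
      rw [Category.assoc]
      exact hN.1 a _ hk.1
    exact (hk.2 _ hmem).unique rfl hab.symm

lemma IsNKernel.isIso_of_isRegEpi_comp_mem {N : MorClass C} (hN : IsMorIdeal N)
    {K A X Y : C} {f : X ⟶ Y} {k : K ⟶ X} (hk : IsNKernel N f k)
    {e : A ⟶ X} (he : IsRegEpi e) (hef : N (e ≫ f)) : IsIso k := by
  have := hk.mono hN
  have := he.isRegularEpi
  obtain ⟨u, hu, -⟩ := hk.2 e hef
  have : StrongEpi (u ≫ k) := hu ▸ inferInstance
  have := strongEpi_of_strongEpi u k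
  exact isIso_of_mono_of_strongEpi k

lemma mem_of_isRegEpi_comp_mem {N : MorClass C} (hN : IsMorIdeal N) (hNk : HasNKernels N)
    {A X Y : C} {f : X ⟶ Y} {e : A ⟶ X} (he : IsRegEpi e) (hef : N (e ≫ f)) : N f := by
  obtain ⟨K, k, hk⟩ := hNk f
  have := hk.isIso_of_isRegEpi_comp_mem hN he hef
  simpa using hN.1 (inv k) _ hk.1

theorem statement7_general (P : Set C)
    (N : MorClass C) (hN : IsMorIdeal N) (hk : HasNKernels N) :
    ∀ ⦃X Y : C⦄ (f : X ⟶ Y), extClass P (restClass P N) f → N f := by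
  rintro X Y f ⟨A, B, -, -, n, e, e', he, -, ⟨-, -, hn⟩, hsq⟩
  refine mem_of_isRegEpi_comp_mem hN hk he ?_
  rw [hsq]
  exact hN.2 n e' hn

/-- For a regular category C with projective cover P and an ideal N in C
admitting N-kernels, (N_P)^C ⊆ N. -/
theorem statement7 (hC : IsRegularCat C) (P : Set C) (hP : IsProjectiveCover P)
    (N : MorClass C) (hN : IsMorIdeal N) (hk : HasNKernels N) :
    ∀ ⦃X Y : C⦄ (f : X ⟶ Y), extClass P (restClass P N) f → N f :=
  statement7_general P N hN hk
end

section
/- Let C be a regular category with projective cover P and let N be an ideal in C. Then N ⊆ (N_P)^C if and only if every regular epimorphism in C is N-saturating. -/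
open CategoryTheory CategoryTheory.Limits

universe v u

variable {C : Type u} [Category.{v} C]

/-! Both directions are lifting arguments against regular epimorphisms out of `P`-objects.
If `n ∈ (N_P)^C` is witnessed by `e ≫ n = n' ≫ e'`, lifting the cover `e'` through a regular
epi `f` turns the square into one saturating `n` along `f`. Conversely, saturating `n` along a
cover `e' : B ↠ Y` and covering the resulting object by a `P`-object gives an `(N_P)^C`-square. -/

section Saturating

variable {P : Set C} {N : MorClass C}

theorem isSaturating_of_le_extClass_restClass (hP : IsProjectiveCover P) (hN : IsMorIdeal N)
    (hNP : ∀ ⦃X Y : C⦄ (f : X ⟶ Y), N f → extClass P (restClass P N) f)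
    {X Y : C} {f : X ⟶ Y} (hf : IsRegEpi f) : IsSaturating N f := by
  intro X' n hn
  obtain ⟨A, B, -, hB, n', e, e', he, -, ⟨-, -, hn'⟩, hsq⟩ := hNP n hn
  obtain ⟨t, ht⟩ := hP.proj hB f hf e'
  exact ⟨A, e, n' ≫ t, he, hN.2 n' t hn', by rw [Category.assoc, ht, hsq]⟩

theorem extClass_restClass_of_isSaturating (hP : IsProjectiveCover P) (hN : IsMorIdeal N)
    {B X Y : C} (hB : B ∈ P) {e' : B ⟶ Y} (he' : IsRegEpi e') (hsat : IsSaturating N e')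
    {n : X ⟶ Y} (hn : N n) : extClass P (restClass P N) n := by
  obtain ⟨Z, g, m, hg, hm, hsq⟩ := hsat n hn
  obtain ⟨A, hA, q, hq⟩ := hP.covers X
  obtain ⟨t, ht⟩ := hP.proj hA g hg q
  refine ⟨A, B, hA, hB, t ≫ m, q, e', hq, he', ⟨hA, hB, hN.1 t m hm⟩, ?_⟩
  rw [← ht, Category.assoc, Category.assoc, hsq]

end Saturating

theorem statement8_general (P : Set C) (hP : IsProjectiveCover P)
    (N : MorClass C) (hN : IsMorIdeal N) :
    (∀ ⦃X Y : C⦄ (f : X ⟶ Y), N f → extClass P (restClass P N) f) ↔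
      (∀ ⦃X Y : C⦄ (f : X ⟶ Y), IsRegEpi f → IsSaturating N f) := by
  refine ⟨fun hNP _ _ _ hf => isSaturating_of_le_extClass_restClass hP hN hNP hf,
    fun hsat _ Y _ hn => ?_⟩
  obtain ⟨B, hB, e', he'⟩ := hP.covers Y
  exact extClass_restClass_of_isSaturating hP hN hB he' (hsat e' he') hn

/-- For a regular category C with projective cover P and an ideal N in C,
N ⊆ (N_P)^C if and only if every regular epimorphism in C is N-saturating. -/
theorem statement8 (hC : IsRegularCat C) (P : Set C) (hP : IsProjectiveCover P)
    (N : MorClass C) (hN : IsMorIdeal N) :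
    (∀ ⦃X Y : C⦄ (f : X ⟶ Y), N f → extClass P (restClass P N) f) ↔
      (∀ ⦃X Y : C⦄ (f : X ⟶ Y), IsRegEpi f → IsSaturating N f) :=
  statement8_general P hP N hN
end

section
/- Let C be a regular category with projective cover P and let N be an ideal in P. Then every regular epimorphism in C is N^C-saturating. -/
open CategoryTheory CategoryTheory.Limits

universe v u

variable {C : Type u} [Category.{v} C]

theorem extClass_of_mem {P : Set C} {N : MorClass C} {A B : C} (hA : A ∈ P) (hB : B ∈ P)
    {n : A ⟶ B} (hn : N n) : extClass P N n :=
  ⟨A, B, hA, hB, n, 𝟙 A, 𝟙 B, isRegEpi_id A, isRegEpi_id B, hn, by simp⟩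

theorem extClass_comp {P : Set C} (hP : IsProjectiveCover P) {N : MorClass C}
    (hN : IsMorIdealOn P N) {X Y Z : C} {n : X ⟶ Y} (hn : extClass P N n) (g : Y ⟶ Z) :
    extClass P N (n ≫ g) := by
  obtain ⟨A, B, hA, hB, n₀, e, e', he, -, hn₀, hcomm⟩ := hn
  obtain ⟨Q, hQ, q, hq⟩ := hP.covers Z
  obtain ⟨t, ht⟩ := hP.proj hB q hq (e' ≫ g)
  refine ⟨A, Q, hA, hQ, n₀ ≫ t, e, q, he, hq, hN.2.2 n₀ t hQ hn₀, ?_⟩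
  rw [Category.assoc, ht, reassoc_of% hcomm]

theorem statement9_general (P : Set C) (hP : IsProjectiveCover P)
    (N : MorClass C) (hN : IsMorIdealOn P N) :
    ∀ ⦃X Y : C⦄ (f : X ⟶ Y), IsRegEpi f → IsSaturating (extClass P N) f := by
  rintro X Y f hf X' n ⟨A, B, hA, hB, n₀, e, e', he, -, hn₀, hcomm⟩
  obtain ⟨s, hs⟩ := hP.proj hB f hf e'
  refine ⟨A, e, n₀ ≫ s, he, extClass_comp hP hN (extClass_of_mem hA hB hn₀) s, ?_⟩
  rw [Category.assoc, hs, hcomm]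

/-- For a regular category C with projective cover P and an ideal N in P,
every regular epimorphism in C is N^C-saturating. -/
theorem statement9 (hC : IsRegularCat C) (P : Set C) (hP : IsProjectiveCover P)
    (N : MorClass C) (hN : IsMorIdealOn P N) :
    ∀ ⦃X Y : C⦄ (f : X ⟶ Y), IsRegEpi f → IsSaturating (extClass P N) f :=
  statement9_general P hP N hN
end
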